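/- arXiv:1810.07606 — 3 statements merged into one kernel-verified Lean document; each statement's English description precedes it below -/
import Mathlib

section
/- (i) There exist C > 0 and r₀ ∈ (0, c) such that g(r) ≤ C·(c − r)^(−1/α) for all r ∈ [r₀, c); (ii) the improper integral ∫₀^c g(s) ds is finite, so that G is well defined and continuous on [−c, c] and three times continuously differentiable on (−c, c); (iii) G(−u) = G(u) for all u ∈ [−c, c]. -/
/-!
`Φ` is an odd increasing bijection of `ℝ` onto `(-c, c)` with `Φ' > 0`, so by the inverse
function theorem `g` is odd, increasing and `C²` on `(-c, c)`; hence `G` is even and `C³` there. Near `c`, integrating `Φ' ≤ C₀ y^(-α-1)` gives `c - Φ y ≤ (C₀/α) y^(-α)`; inverting this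
at `y = g r` yields `g r ≲ (c - r)^(-1/α)`, which is integrable at `c` because `α > 1`. Monotone
`g` is then dominated on `[0, c)`, and `G` extends continuously to `[-c, c]`.
-/

open Set Filter MeasureTheory intervalIntegral Topology Function

section InverseFunction

variable {f : ℝ → ℝ}

theorem Ioo_subset_range_of_tendsto {a b : ℝ} (hf : Continuous f)
    (hbot : Tendsto f atBot (𝓝 a)) (htop : Tendsto f atTop (𝓝 b)) : Ioo a b ⊆ range f :=
  fun _ hr => mem_range_of_exists_le_of_exists_ge hf
    ((hbot.eventually_lt_const hr.1).exists.imp fun _ => le_of_lt)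
    ((htop.eventually_const_lt hr.2).exists.imp fun _ => le_of_lt)

theorem Function.Odd.tendsto_atBot {c : ℝ} (hodd : f.Odd)
    (htop : Tendsto f atTop (𝓝 c)) : Tendsto f atBot (𝓝 (-c)) :=
  ((htop.comp tendsto_neg_atBot_atTop).neg).congr fun y => by rw [comp_apply, hodd y, neg_neg]

theorem StrictMono.lt_of_tendsto_atTop {c : ℝ} (hf : StrictMono f)
    (htop : Tendsto f atTop (𝓝 c)) (y : ℝ) : f y < c :=
  (hf (lt_add_one y)).trans_le (hf.monotone.ge_of_tendsto htop _)

theorem Function.Odd.invFun_neg (hodd : f.Odd) (hinj : Injective f) {r : ℝ}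
    (hr : r ∈ range f) : invFun f (-r) = -invFun f r := by
  obtain ⟨y, rfl⟩ := hr
  rw [← hodd, leftInverse_invFun hinj, leftInverse_invFun hinj]

theorem StrictMono.monotoneOn_invFun (hf : StrictMono f) : MonotoneOn (invFun f) (range f) := by
  rintro _ ⟨x, rfl⟩ _ ⟨y, rfl⟩ hxy
  rw [leftInverse_invFun hf.injective, leftInverse_invFun hf.injective]
  exact hf.le_iff_le.mp hxy

theorem contDiffAt_invFun {n : WithTop ℕ∞} (hf : ContDiff ℝ n f) (hn : n ≠ 0)
    (hinj : Injective f) {x : ℝ} (hf' : deriv f x ≠ 0) : ContDiffAt ℝ n (invFun f) (f x) := by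
  have hfd := ((hf.differentiable hn).differentiableAt.hasDerivAt).hasFDerivAt_equiv hf'
  refine (hf.contDiffAt.to_localInverse hfd hn).congr_of_eventuallyEq ?_
  filter_upwards [(hf.contDiffAt.hasStrictFDerivAt' hfd hn).eventually_right_inverse] with y hy
  conv_lhs => rw [← hy]
  exact leftInverse_invFun hinj _

end InverseFunction

section Decay

variable {f : ℝ → ℝ} {c C₀ α y₀ : ℝ}

/-- The derivative bound makes `f y + (C₀ / α) y ^ (-α)` antitone on `[y₀, ∞)`, and it tends
to `c`. -/
theorem sub_le_of_deriv_le_rpow (hf : Differentiable ℝ f) (hlim : Tendsto f atTop (𝓝 c))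
    (hα : 0 < α) (hy₀ : 0 < y₀) (hdecay : ∀ y, y₀ ≤ y → deriv f y ≤ C₀ * y ^ (-α - 1))
    {y : ℝ} (hy : y₀ ≤ y) : c - f y ≤ C₀ / α * y ^ (-α) := by
  set ψ : ℝ → ℝ := fun z => f z + C₀ / α * z ^ (-α)
  have hψ' : ∀ z, 0 < z → HasDerivAt ψ (deriv f z - C₀ * z ^ (-α - 1)) z := by
    intro z hz
    have h := (hf z).hasDerivAt.add
      ((Real.hasDerivAt_rpow_const (p := -α) (Or.inl hz.ne')).const_mul (C₀ / α))
    rwa [show C₀ / α * (-α * z ^ (-α - 1)) = -(C₀ * z ^ (-α - 1)) by field_simp,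
      ← sub_eq_add_neg] at h
  have hanti : AntitoneOn ψ (Ici y₀) := by
    refine antitoneOn_of_deriv_nonpos (convex_Ici y₀)
      (fun z hz => (hψ' z (hy₀.trans_le hz)).continuousAt.continuousWithinAt) ?_ ?_ <;>
      rw [interior_Ici]
    · exact fun z hz => (hψ' z (hy₀.trans hz)).differentiableAt.differentiableWithinAt
    · intro z hz
      rw [(hψ' z (hy₀.trans hz)).deriv]
      linarith [hdecay z hz.le]
  have hψlim : Tendsto ψ atTop (𝓝 c) := by
    simpa using hlim.add ((tendsto_rpow_neg_atTop hα).const_mul (C₀ / α))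
  have hcψ : c ≤ ψ y := le_of_tendsto hψlim <|
    (eventually_ge_atTop y).mono fun z hz => hanti hy (hy.trans hz) hz
  simp only [ψ] at hcψ
  linarith

theorem le_mul_rpow_of_le_mul_rpow_neg {t y K : ℝ} (ht : 0 < t) (hy : 0 < y) (hK : 0 < K)
    (hα : 0 < α) (h : t ≤ K * y ^ (-α)) : y ≤ K ^ (1 / α) * t ^ (-1 / α) := by
  have hneg : -1 / α ≤ 0 := by rw [neg_div]; exact neg_nonpos.mpr (by positivity)
  calc y = (y ^ (-α)) ^ (-1 / α) := by
        rw [← Real.rpow_mul hy.le, show -α * (-1 / α) = 1 by field_simp, Real.rpow_one]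
    _ ≤ (t / K) ^ (-1 / α) :=
        Real.rpow_le_rpow_of_nonpos (div_pos ht hK) (by rw [div_le_iff₀' hK]; exact h) hneg
    _ = K ^ (1 / α) * t ^ (-1 / α) := by
        rw [Real.div_rpow ht.le hK.le, neg_div, Real.rpow_neg hK.le, div_eq_mul_inv, inv_inv,
          mul_comm]

theorem invFun_le_of_deriv_le_rpow (hf : StrictMono f) (hdiff : Differentiable ℝ f)
    (hlim : Tendsto f atTop (𝓝 c)) (hα : 0 < α) (hC₀ : 0 < C₀) (hy₀ : 0 < y₀)
    (hdecay : ∀ y, y₀ ≤ y → deriv f y ≤ C₀ * y ^ (-α - 1)) {r : ℝ} (hr : r ∈ range f)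
    (hr₀ : f y₀ ≤ r) : invFun f r ≤ (C₀ / α) ^ (1 / α) * (c - r) ^ (-1 / α) := by
  obtain ⟨y, rfl⟩ := hr
  rw [leftInverse_invFun hf.injective]
  have hy : y₀ ≤ y := hf.le_iff_le.mp hr₀
  exact le_mul_rpow_of_le_mul_rpow_neg (sub_pos.mpr (hf.lt_of_tendsto_atTop hlim y))
    (hy₀.trans_le hy) (div_pos hC₀ hα) hα (sub_le_of_deriv_le_rpow hdiff hlim hα hy₀ hdecay hy)

end Decay

theorem intervalIntegrable_sub_rpow {c p : ℝ} (hp : -1 < p) :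
    IntervalIntegrable (fun x => (c - x) ^ p) volume 0 c := by
  simpa using ((intervalIntegrable_rpow' (a := 0) (b := c) hp).comp_sub_left c).symm

theorem intervalIntegrable_of_monotoneOn_of_le {f h : ℝ → ℝ} {a b r : ℝ} (hr : r ∈ Ico a b)
    (hmono : MonotoneOn f (Ico a b)) (hfa : 0 ≤ f a) (hh : IntervalIntegrable h volume a b)
    (hbound : ∀ x ∈ Ico r b, f x ≤ h x) : IntervalIntegrable f volume a b := by
  have hab : a ≤ b := hr.1.trans hr.2.le
  have ha : a ∈ Ico a b := ⟨le_rfl, hr.1.trans_lt hr.2⟩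
  rw [intervalIntegrable_iff_integrableOn_Ico_of_le hab] at hh ⊢
  refine Integrable.mono' ((integrableOn_const (C := f r) (by simp)).add hh.norm)
    (aemeasurable_restrict_of_monotoneOn measurableSet_Ico hmono).aestronglyMeasurable ?_
  rw [ae_restrict_iff' measurableSet_Ico]
  refine ae_of_all _ fun x hx => ?_
  have hfx : 0 ≤ f x := hfa.trans (hmono ha hx hx.1)
  have hfr : 0 ≤ f r := hfa.trans (hmono ha hr hr.1)
  rw [Real.norm_eq_abs, abs_of_nonneg hfx, Pi.add_apply]
  rcases le_or_gt x r with hxr | hrx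
  · linarith [hmono hx hr hxr, norm_nonneg (h x)]
  · linarith [hbound x ⟨hrx.le, hx.2⟩, Real.le_norm_self (h x)]

section OddFunction

variable {f : ℝ → ℝ} {c : ℝ}

theorem IntervalIntegrable.neg_left_of_odd (hc : 0 ≤ c)
    (hodd : ∀ x ∈ Ioo (-c) c, f (-x) = -f x) (hf : IntervalIntegrable f volume 0 c) :
    IntervalIntegrable f volume (-c) c := by
  have hrefl : IntervalIntegrable (fun x => -f (-x)) volume (-c) 0 := by
    have h := ((IntervalIntegrable.iff_comp_neg (a := 0) (b := c)).1 hf).neg.symm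
    rwa [neg_zero] at h
  refine (hrefl.congr_uIoo fun x hx => ?_).trans hf
  have hx' := uIoo_subset_Ioo ⟨le_rfl, by linarith⟩ ⟨by linarith, hc⟩ hx
  simp [hodd x hx']

theorem integral_zero_neg_of_odd (hodd : ∀ x ∈ Ioo (-c) c, f (-x) = -f x) {u : ℝ}
    (hu : u ∈ Icc (-c) c) : ∫ x in 0..-u, f x = ∫ x in 0..u, f x := by
  have hsub : uIoo 0 u ⊆ Ioo (-c) c :=
    uIoo_subset_Ioo ⟨by linarith [hu.1, hu.2], by linarith [hu.1, hu.2]⟩ hu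
  calc ∫ x in 0..-u, f x = -∫ x in 0..u, f (-x) := by
        rw [integral_symm, integral_comp_neg, neg_zero]
    _ = -∫ x in 0..u, -f x := by rw [integral_congr_uIoo fun x hx => hodd x (hsub hx)]
    _ = ∫ x in 0..u, f x := by rw [intervalIntegral.integral_neg, neg_neg]

end OddFunction

theorem contDiffOn_primitive {f : ℝ → ℝ} {a b t : ℝ} {n : ℕ} (hf : ContDiffOn ℝ n f (Ioo a b))
    (ht : t ∈ Ioo a b) : ContDiffOn ℝ (n + 1) (fun u => ∫ x in t..u, f x) (Ioo a b) := by
  have hderiv : ∀ u ∈ Ioo a b, HasDerivAt (fun u => ∫ x in t..u, f x) (f u) u := fun u hu =>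
    integral_hasDerivAt_right
      ((hf.continuousOn.mono (ordConnected_Ioo.uIcc_subset ht hu)).intervalIntegrable)
      (hf.continuousOn.stronglyMeasurableAtFilter isOpen_Ioo u hu)
      (hf.continuousOn.continuousAt (isOpen_Ioo.mem_nhds hu))
  rw [contDiffOn_succ_iff_deriv_of_isOpen isOpen_Ioo]
  exact ⟨fun u hu => (hderiv u hu).differentiableAt.differentiableWithinAt, by simp,
    hf.congr fun u hu => (hderiv u hu).deriv⟩

theorem stmt_1 (c α : ℝ) (hc : 0 < c) (hα : 2 ≤ α)
    (Φ : ℝ → ℝ) (hΦ : ContDiff ℝ 2 Φ)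
    (hodd : ∀ y : ℝ, Φ (-y) = -Φ y)
    (hΦ' : ∀ y : ℝ, 0 < deriv Φ y)
    (hlim : Filter.Tendsto Φ Filter.atTop (nhds c))
    (C₀ y₀ : ℝ) (hC₀ : 0 < C₀) (hy₀ : 0 < y₀)
    (hdecay : ∀ y : ℝ, y₀ ≤ y → deriv Φ y ≤ C₀ * y ^ (-α - 1)) :
    let g : ℝ → ℝ := Function.invFun Φ
    let G : ℝ → ℝ := fun u => ∫ s in (0:ℝ)..u, g s
    (∃ C > (0:ℝ), ∃ r₀ ∈ Set.Ioo (0:ℝ) c,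
        ∀ r ∈ Set.Ico r₀ c, g r ≤ C * (c - r) ^ (-1 / α)) ∧
    IntervalIntegrable g MeasureTheory.volume 0 c ∧
    ContinuousOn G (Set.Icc (-c) c) ∧
    ContDiffOn ℝ 3 G (Set.Ioo (-c) c) ∧
    (∀ u ∈ Set.Icc (-c) c, G (-u) = G u) := by
  intro g G
  have hα0 : 0 < α := by linarith
  have hmono : StrictMono Φ := strictMono_of_deriv_pos hΦ'
  have hrange : Ioo (-c) c ⊆ range Φ :=
    Ioo_subset_range_of_tendsto hΦ.continuous (Function.Odd.tendsto_atBot hodd hlim) hlim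
  have hgodd : ∀ x ∈ Ioo (-c) c, g (-x) = -g x := fun x hx =>
    Function.Odd.invFun_neg hodd hmono.injective (hrange hx)
  have hΦ0 : Φ 0 = 0 := Function.Odd.map_zero hodd
  have hg0 : g 0 = 0 := by simpa [hΦ0] using leftInverse_invFun hmono.injective 0
  have hr₀ : Φ y₀ ∈ Ioo 0 c := ⟨hΦ0 ▸ hmono hy₀, hmono.lt_of_tendsto_atTop hlim y₀⟩
  have hbound : ∀ r ∈ Ico (Φ y₀) c, g r ≤ (C₀ / α) ^ (1 / α) * (c - r) ^ (-1 / α) :=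
    fun r hr => invFun_le_of_deriv_le_rpow hmono (hΦ.differentiable (by norm_num)) hlim hα0 hC₀
      hy₀ hdecay (hrange ⟨by linarith [hr₀.1, hr.1], hr.2⟩) hr.1
  have hexp : -1 < -1 / α := by rw [neg_div, neg_lt_neg_iff, div_lt_one hα0]; linarith
  have hint : IntervalIntegrable g volume 0 c :=
    intervalIntegrable_of_monotoneOn_of_le ⟨hr₀.1.le, hr₀.2⟩
      (hmono.monotoneOn_invFun.mono fun x hx => hrange ⟨by linarith [hx.1], hx.2⟩) hg0.ge
      ((intervalIntegrable_sub_rpow hexp).const_mul _) hbound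
  have hgC : ContDiffOn ℝ 2 g (Ioo (-c) c) := fun u hu => by
    obtain ⟨y, rfl⟩ := hrange hu
    exact (contDiffAt_invFun hΦ (by norm_num) hmono.injective (hΦ' y).ne').contDiffWithinAt
  refine ⟨⟨_, by positivity, Φ y₀, hr₀, hbound⟩, hint, ?_, contDiffOn_primitive (n := 2) hgC
    ⟨by linarith, hc⟩, fun u hu => integral_zero_neg_of_odd hgodd hu⟩
  rw [← uIcc_of_le (by linarith : -c ≤ c)]
  exact continuousOn_primitive_interval' (hint.neg_left_of_odd hc.le hgodd)
    (by rw [uIcc_of_le (by linarith)]; exact ⟨by linarith, hc.le⟩)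
end

section
/- Let u : (0,T) × ℝ → (0,∞) and S : (0,T) × ℝ → ℝ be twice continuously differentiable functions such that: for every t ∈ (0,T), u(t,·) is integrable with ∫_ℝ u(t,x) dx = M; the map φ : (0,T) × (0,M) → ℝ defined implicitly by ∫_{−∞}^{φ(t,η)} u(t,x) dx = η is twice continuously differentiable; for each t, the flux x ↦ u·Φ(u^{m−1}·∂u/∂x) − a·(∂S/∂x)·u tends to 0 as x → −∞ and differentiation of x ↦ ∫_{−∞}^x u(t,s) ds under the integral sign in t is justified; and the equations ∂u/∂t = ∂/∂x ( u·Φ(u^{m−1}·∂u/∂x) − a·(∂S/∂x)·u ) and −∂²S/∂x² = u hold on (0,T) × ℝ. Then the function v(t,η) := ∂φ/∂η(t,η) = 1/u(t,φ(t,η)) satisfies the dual equation ∂v/∂t = ∂/∂η [ Φ( (∂v/∂η) / v^(2+m) ) ] − a at every point of (0,T) × (0,M). -/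
/-!
Work in mass coordinates: with `F(t, x) = ∫_{-∞}^x u(t, s) ds`, the map `φ(t, ·)` inverts
`F(t, ·)`. Differentiating `F(t, φ(t, η)) = η` in `η` gives `∂_η φ = 1 / u(t, φ)`. In `t`, the
equation for `u` turns `∂_t F(t, x) = ∫_{-∞}^x ∂_x(flux)` into `flux(t, x)`, since the flux
vanishes at `-∞`; hence `∂_t φ = -flux / u = a ∂_x S(φ) - Φ(u^(m-1) ∂_x u(φ))`. Differentiating
this in `η`, the Poisson equation `-∂²_x S = u` turns the first term into `-a`, and
`∂²_η φ / (∂_η φ)^(2+m) = -u^(m-1) ∂_x u(φ)` together with the oddness of `Φ` turns the second into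
`∂_η Φ(∂²_η φ / (∂_η φ)^(2+m))`. Symmetry of second derivatives of `φ` finishes the proof.
-/

open Set Filter Topology MeasureTheory ContinuousLinearMap

theorem ContinuousOn.continuous_slice {α β γ : Type*} [TopologicalSpace α] [TopologicalSpace β]
    [TopologicalSpace γ] {f : α → β → γ} {U : Set α}
    (hf : ContinuousOn (fun p : α × β => f p.1 p.2) (U ×ˢ univ)) {t : α} (ht : t ∈ U) :
    Continuous (f t) :=
  continuousOn_univ.mp <| hf.comp (continuous_const.prodMk continuous_id).continuousOn
    fun _ _ => ⟨ht, trivial⟩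

section PartialDerivatives

variable {E : Type*} [NormedAddCommGroup E] [NormedSpace ℝ E]

theorem DifferentiableAt.hasDerivAt_fst_slice {f : ℝ → ℝ → E} {t x : ℝ}
    (hf : DifferentiableAt ℝ (fun p : ℝ × ℝ => f p.1 p.2) (t, x)) :
    HasDerivAt (fun τ => f τ x) (fderiv ℝ (fun p : ℝ × ℝ => f p.1 p.2) (t, x) (1, 0)) t := by
  have hl : HasDerivAt (fun τ : ℝ => (τ, x)) ((1 : ℝ), (0 : ℝ)) t :=
    (hasDerivAt_id' t).prodMk (hasDerivAt_const t x)
  exact hf.hasFDerivAt.comp_hasDerivAt t hl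

theorem DifferentiableAt.hasDerivAt_snd_slice {f : ℝ → ℝ → E} {t x : ℝ}
    (hf : DifferentiableAt ℝ (fun p : ℝ × ℝ => f p.1 p.2) (t, x)) :
    HasDerivAt (f t) (fderiv ℝ (fun p : ℝ × ℝ => f p.1 p.2) (t, x) (0, 1)) x := by
  have hl : HasDerivAt (fun y : ℝ => (t, y)) ((0 : ℝ), (1 : ℝ)) x :=
    (hasDerivAt_const x t).prodMk (hasDerivAt_id' x)
  exact hf.hasFDerivAt.comp_hasDerivAt x hl

variable {f : ℝ → ℝ → E} {W : Set (ℝ × ℝ)} {U : Set ℝ}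

theorem ContDiffOn.continuousOn_deriv_fst (hf : ContDiffOn ℝ 1 (fun p : ℝ × ℝ => f p.1 p.2) W)
    (hW : IsOpen W) : ContinuousOn (fun p : ℝ × ℝ => deriv (fun τ => f τ p.2) p.1) W := by
  refine ((apply ℝ E ((1 : ℝ), (0 : ℝ))).continuous.comp_continuousOn
    (hf.continuousOn_fderiv_of_isOpen hW le_rfl)).congr fun p hp => ?_
  exact ((hf.contDiffAt (hW.mem_nhds hp)).differentiableAt one_ne_zero).hasDerivAt_fst_slice.deriv

theorem ContDiffOn.continuousOn_deriv_snd (hf : ContDiffOn ℝ 1 (fun p : ℝ × ℝ => f p.1 p.2) W)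
    (hW : IsOpen W) : ContinuousOn (fun p : ℝ × ℝ => deriv (f p.1) p.2) W := by
  refine ((apply ℝ E ((0 : ℝ), (1 : ℝ))).continuous.comp_continuousOn
    (hf.continuousOn_fderiv_of_isOpen hW le_rfl)).congr fun p hp => ?_
  exact ((hf.contDiffAt (hW.mem_nhds hp)).differentiableAt one_ne_zero).hasDerivAt_snd_slice.deriv

theorem ContDiffOn.deriv_deriv_comm (hf : ContDiffOn ℝ 2 (fun p : ℝ × ℝ => f p.1 p.2) W)
    (hW : IsOpen W) {t x : ℝ} (hp : (t, x) ∈ W) :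
    deriv (fun τ => deriv (f τ) x) t = deriv (fun y => deriv (fun τ => f τ y) t) x := by
  have hf' : ContDiffOn ℝ (1 + 1) (fun p : ℝ × ℝ => f p.1 p.2) W := by
    rwa [one_add_one_eq_two]
  set D : ℝ → ℝ → ℝ × ℝ →L[ℝ] E := fun τ y => fderiv ℝ (fun p : ℝ × ℝ => f p.1 p.2) (τ, y)
  have hD : DifferentiableAt ℝ (fun p : ℝ × ℝ => D p.1 p.2) (t, x) :=
    (((contDiffOn_succ_iff_fderiv_of_isOpen hW).1 hf').2.2.contDiffAt
      (hW.mem_nhds hp)).differentiableAt one_ne_zero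
  have hdiff : ∀ q ∈ W, DifferentiableAt ℝ (fun p : ℝ × ℝ => f p.1 p.2) q := fun q hq =>
    (hf.contDiffAt (hW.mem_nhds hq)).differentiableAt two_ne_zero
  have hfst : (fun τ => deriv (f τ) x) =ᶠ[𝓝 t]
      fun τ => D τ x (0, 1) := by
    filter_upwards [(continuous_id.prodMk continuous_const).continuousAt.preimage_mem_nhds
      (hW.mem_nhds hp)] with τ hτ
    exact (hdiff _ hτ).hasDerivAt_snd_slice.deriv
  have hsnd : (fun y => deriv (fun τ => f τ y) t) =ᶠ[𝓝 x]
      fun y => D t y (1, 0) := by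
    filter_upwards [(continuous_const.prodMk continuous_id).continuousAt.preimage_mem_nhds
      (hW.mem_nhds hp)] with y hy
    exact (hdiff _ hy).hasDerivAt_fst_slice.deriv
  rw [hfst.deriv_eq, hsnd.deriv_eq,
    (hD.hasDerivAt_fst_slice.clm_apply (hasDerivAt_const t ((0 : ℝ), (1 : ℝ)))).deriv,
    (hD.hasDerivAt_snd_slice.clm_apply (hasDerivAt_const x ((1 : ℝ), (0 : ℝ)))).deriv]
  simpa using (hf.contDiffAt (hW.mem_nhds hp)).isSymmSndFDerivAt (by simp) (1, 0) (0, 1)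

theorem ContDiffOn.contDiff_slice {n : WithTop ℕ∞}
    (hf : ContDiffOn ℝ n (fun p : ℝ × ℝ => f p.1 p.2) (U ×ˢ univ)) {t : ℝ} (ht : t ∈ U) :
    ContDiff ℝ n (f t) :=
  contDiffOn_univ.mp <| hf.comp (contDiff_const.prodMk contDiff_id).contDiffOn
    fun _ _ => ⟨ht, trivial⟩

end PartialDerivatives

theorem hasDerivAt_implicit_of_partials {F F₁ F₂ : ℝ → ℝ → ℝ} {g : ℝ → ℝ} {t : ℝ}
    (hF₁ : ∀ᶠ p in 𝓝 (t, g t), HasDerivAt (F · p.2) (F₁ p.1 p.2) p.1)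
    (hF₂ : ∀ᶠ p in 𝓝 (t, g t), HasDerivAt (F p.1 ·) (F₂ p.1 p.2) p.2)
    (hc₁ : ContinuousAt (fun p : ℝ × ℝ => F₁ p.1 p.2) (t, g t))
    (hc₂ : ContinuousAt (fun p : ℝ × ℝ => F₂ p.1 p.2) (t, g t))
    (hg : DifferentiableAt ℝ g t) (hFg : ∀ᶠ τ in 𝓝 t, F τ (g τ) = F t (g t))
    (h₂ : F₂ t (g t) ≠ 0) :
    HasDerivAt g (-F₁ t (g t) / F₂ t (g t)) t := by
  have hF : HasFDerivAt (fun p : ℝ × ℝ => F p.1 p.2)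
      ((toSpanSingleton ℝ (F₁ t (g t))).coprod (toSpanSingleton ℝ (F₂ t (g t)))) (t, g t) :=
    (hasStrictFDerivAt_uncurry_coprod (f₁ := fun τ y => toSpanSingleton ℝ (F₁ τ y))
      (f₂ := fun τ y => toSpanSingleton ℝ (F₂ τ y)) hF₁ hF₂
      ((toSpanSingletonCLE (𝕜 := ℝ) (E := ℝ)).continuous.continuousAt.comp hc₁)
      ((toSpanSingletonCLE (𝕜 := ℝ) (E := ℝ)).continuous.continuousAt.comp hc₂)).hasFDerivAt
  have hcomp := hF.comp_hasDerivAt t ((hasDerivAt_id t).prodMk hg.hasDerivAt)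
  have hconst : HasDerivAt (fun τ => F τ (g τ)) 0 t :=
    (hasDerivAt_const t _).congr_of_eventuallyEq hFg
  have h := hcomp.unique hconst
  simp only [coprod_apply, toSpanSingleton_apply, smul_eq_mul, one_mul] at h
  rw [show -F₁ t (g t) / F₂ t (g t) = deriv g t by rw [div_eq_iff h₂]; linarith]
  exact hg.hasDerivAt

theorem hasDerivAt_intervalIntegral_of_contDiffOn {u : ℝ → ℝ → ℝ} {U : Set ℝ} (hU : IsOpen U)
    (hu : ContDiffOn ℝ 1 (fun p : ℝ × ℝ => u p.1 p.2) (U ×ˢ univ)) {t : ℝ} (ht : t ∈ U)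
    (x y : ℝ) :
    HasDerivAt (fun τ => ∫ s in x..y, u τ s) (∫ s in x..y, deriv (fun τ => u τ s) t) t := by
  have hW : IsOpen (U ×ˢ (univ : Set ℝ)) := hU.prod isOpen_univ
  have hu_t : ContinuousOn (fun p : ℝ × ℝ => deriv (fun τ => u τ p.2) p.1) (U ×ˢ univ) :=
    hu.continuousOn_deriv_fst hW
  obtain ⟨δ, hδ, hball⟩ := Metric.isOpen_iff.mp hU t ht
  obtain ⟨C, hC⟩ :=
    ((isCompact_closedBall t (δ / 2)).prod isCompact_uIcc).exists_bound_of_continuousOn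
    (hu_t.mono (prod_mono ((Metric.closedBall_subset_ball (half_lt_self hδ)).trans hball)
      (subset_univ (uIcc x y))))
  refine (intervalIntegral.hasDerivAt_integral_of_dominated_loc_of_deriv_le (μ := volume) (F := u)
    (F' := fun τ s => deriv (fun τ => u τ s) τ) (bound := fun _ => C)
    (Metric.ball_mem_nhds t (half_pos hδ)) ?_ ?_ ?_ ?_ intervalIntegrable_const ?_).2
  · filter_upwards [hU.mem_nhds ht] with τ hτ
    exact (hu.continuousOn.continuous_slice hτ).aestronglyMeasurable
  · exact (hu.continuousOn.continuous_slice ht).intervalIntegrable x y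
  · exact (hu_t.continuous_slice (f := fun τ s => deriv (fun τ => u τ s) τ) ht).aestronglyMeasurable
  · refine Eventually.of_forall fun s hs τ hτ => hC (τ, s) ⟨Metric.ball_subset_closedBall hτ, ?_⟩
    exact uIoc_subset_uIcc hs
  · refine Eventually.of_forall fun s _ τ hτ => ?_
    have := hball (Metric.ball_subset_ball (half_le_self hδ.le) hτ)
    exact ((hu.contDiffAt (hW.mem_nhds ⟨this, trivial⟩)).differentiableAt
      one_ne_zero).hasDerivAt_fst_slice.differentiableAt.hasDerivAt

theorem hasDerivAt_integral_Iic {f : ℝ → ℝ} (hf : Continuous f) (hint : Integrable f) (x : ℝ) :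
    HasDerivAt (fun y => ∫ s in Iic y, f s) (f x) x := by
  have key : (fun y => ∫ s in Iic y, f s) =
      fun y => (∫ s in (0 : ℝ)..y, f s) + ∫ s in Iic 0, f s := by
    ext y
    rw [← intervalIntegral.integral_Iic_sub_Iic hint.integrableOn hint.integrableOn, sub_add_cancel]
  rw [key]
  exact (hf.integral_hasStrictDerivAt 0 x).hasDerivAt.add_const _

theorem hasDerivAt_integral_Iic_of_deriv_eq {u : ℝ → ℝ → ℝ} {ψ : ℝ → ℝ} {U : Set ℝ}
    (hU : IsOpen U) (hu : ContDiffOn ℝ 1 (fun p : ℝ × ℝ => u p.1 p.2) (U ×ˢ univ))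
    (hint : ∀ τ ∈ U, Integrable (u τ)) {t : ℝ} (ht : t ∈ U)
    (hdiff : ∀ x, HasDerivAt (fun τ => ∫ s in Iic x, u τ s)
      (∫ s in Iic x, deriv (fun τ => u τ s) t) t)
    (hψ : ∀ x, HasDerivAt ψ (deriv (fun τ => u τ x) t) x) (hψ0 : Tendsto ψ atBot (𝓝 0))
    (x : ℝ) :
    HasDerivAt (fun τ => ∫ s in Iic x, u τ s) (ψ x) t := by
  refine (hdiff x).congr_deriv ?_
  by_cases hx : IntegrableOn (fun s => deriv (fun τ => u τ s) t) (Iic x)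
  · rw [integral_Iic_of_hasDerivAt_of_tendsto' (fun s _ => hψ s) hx hψ0, sub_zero]
  -- Otherwise both Bochner integrals below are the junk value `0`, so `∂_t ∫_y^x u = 0` for
  -- `y ≤ x`: `ψ` is constant on `Iic x`, hence equal to its limit `0` at `-∞`.
  have hcont : Continuous fun s => deriv (fun τ => u τ s) t :=
    (hu.continuousOn_deriv_fst (hU.prod isOpen_univ)).continuous_slice
      (f := fun τ s => deriv (fun τ => u τ s) τ) ht
  have hy : ∀ y ≤ x, ¬IntegrableOn (fun s => deriv (fun τ => u τ s) t) (Iic y) := by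
    intro y hyx hy
    exact hx (Iic_union_Icc_eq_Iic hyx ▸ hy.union hcont.integrableOn_Icc)
  have hψ_eq : ∀ y ≤ x, ψ y = ψ x := by
    intro y hyx
    have hzero : HasDerivAt (fun τ => ∫ s in y..x, u τ s) 0 t := by
      have h := (hdiff x).sub (hdiff y)
      rw [integral_undef (hy x le_rfl), integral_undef (hy y hyx), sub_zero] at h
      refine h.congr_of_eventuallyEq ?_
      filter_upwards [hU.mem_nhds ht] with τ hτ
      exact (intervalIntegral.integral_Iic_sub_Iic (hint τ hτ).integrableOn
        (hint τ hτ).integrableOn).symm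
    have h := hasDerivAt_intervalIntegral_of_contDiffOn hU hu ht y x
    rw [intervalIntegral.integral_eq_sub_of_hasDerivAt (fun s _ => hψ s)
      (hcont.intervalIntegrable y x)] at h
    linarith [h.unique hzero]
  have hψx : Tendsto ψ atBot (𝓝 (ψ x)) :=
    tendsto_const_nhds.congr' (eventually_le_atBot x |>.mono fun y hyx => (hψ_eq y hyx).symm)
  rw [integral_undef hx, tendsto_nhds_unique hψx hψ0]

theorem hasDerivAt_of_integral_Iic_comp_eq {f g : ℝ → ℝ} {θ : ℝ} (hf : Continuous f)
    (hint : Integrable f) (hg : ContinuousAt g θ)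
    (hfg : ∀ᶠ θ' in 𝓝 θ, ∫ s in Iic (g θ'), f s = θ') (hfθ : f (g θ) ≠ 0) :
    HasDerivAt g (f (g θ))⁻¹ θ :=
  (hasDerivAt_integral_Iic hf hint (g θ)).of_local_left_inverse hg hfθ hfg

theorem hasDerivAt_of_integral_Iic_comp_eq_const {u Ψ : ℝ → ℝ → ℝ} {g : ℝ → ℝ} {U : Set ℝ}
    (hU : IsOpen U) (hu : ContinuousOn (fun p : ℝ × ℝ => u p.1 p.2) (U ×ˢ univ))
    (hint : ∀ τ ∈ U, Integrable (u τ))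
    (hΨ : ∀ τ ∈ U, ∀ x, HasDerivAt (fun τ' => ∫ s in Iic x, u τ' s) (Ψ τ x) τ) {t : ℝ}
    (ht : t ∈ U) (hΨt : ContinuousAt (fun p : ℝ × ℝ => Ψ p.1 p.2) (t, g t))
    (hg : DifferentiableAt ℝ g t)
    (hug : ∀ᶠ τ in 𝓝 t, ∫ s in Iic (g τ), u τ s = ∫ s in Iic (g t), u t s)
    (hu0 : u t (g t) ≠ 0) :
    HasDerivAt g (-Ψ t (g t) / u t (g t)) t := by
  have hnhds : U ×ˢ univ ∈ 𝓝 (t, g t) := (hU.prod isOpen_univ).mem_nhds ⟨ht, trivial⟩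
  refine hasDerivAt_implicit_of_partials (F := fun τ y => ∫ s in Iic y, u τ s) ?_ ?_ hΨt
    (hu.continuousAt hnhds) hg hug hu0
  · filter_upwards [hnhds] with p hp using hΨ p.1 hp.1 p.2
  · filter_upwards [hnhds] with p hp
    exact hasDerivAt_integral_Iic (hu.continuous_slice hp.1) (hint p.1 hp.1) p.2

noncomputable def flux (Φ : ℝ → ℝ) (a m : ℝ) (u S : ℝ → ℝ → ℝ) (t x : ℝ) : ℝ :=
  u t x * Φ (u t x ^ (m - 1) * deriv (u t) x) - a * deriv (S t) x * u t x

section Flux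

variable {Φ : ℝ → ℝ} {a m : ℝ} {u S : ℝ → ℝ → ℝ}

theorem contDiff_flux (hΦ : ContDiff ℝ 1 Φ) {t : ℝ} (hu : ContDiff ℝ 2 (u t))
    (hupos : ∀ x, 0 < u t x) (hS : ContDiff ℝ 2 (S t)) : ContDiff ℝ 1 (flux Φ a m u S t) := by
  have hu₁ : ContDiff ℝ 1 (u t) := hu.of_le one_le_two
  have hpow : ContDiff ℝ 1 fun x => u t x ^ (m - 1) :=
    contDiff_iff_contDiffAt.2 fun x => hu₁.contDiffAt.rpow_const_of_ne (hupos x).ne'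
  exact (hu₁.mul (hΦ.comp (hpow.mul hu.deriv'))).sub ((contDiff_const.mul hS.deriv').mul hu₁)

theorem continuousOn_flux (hΦ : Continuous Φ) {W : Set (ℝ × ℝ)} (hW : IsOpen W)
    (hu : ContDiffOn ℝ 1 (fun p : ℝ × ℝ => u p.1 p.2) W)
    (hS : ContDiffOn ℝ 1 (fun p : ℝ × ℝ => S p.1 p.2) W) (hupos : ∀ p ∈ W, 0 < u p.1 p.2) :
    ContinuousOn (fun p : ℝ × ℝ => flux Φ a m u S p.1 p.2) W :=
  (hu.continuousOn.mul (hΦ.comp_continuousOn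
    ((hu.continuousOn.rpow_const fun p hp => Or.inl (hupos p hp).ne').mul
      (hu.continuousOn_deriv_snd hW)))).sub
    ((continuousOn_const.mul (hS.continuousOn_deriv_snd hW)).mul hu.continuousOn)

theorem neg_flux_div {t x : ℝ} (hu : u t x ≠ 0) :
    -flux Φ a m u S t x / u t x = a * deriv (S t) x - Φ (u t x ^ (m - 1) * deriv (u t) x) := by
  rw [flux]
  field_simp
  ring

end Flux

theorem neg_mul_inv_div_sq_div_inv_rpow {c d : ℝ} (hc : 0 < c) (m : ℝ) :
    -(d * c⁻¹) / c ^ 2 / c⁻¹ ^ (2 + m) = -(c ^ (m - 1) * d) := by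
  rw [Real.inv_rpow hc.le, Real.rpow_add hc, Real.rpow_sub hc, Real.rpow_one, Real.rpow_two]
  have := (Real.rpow_pos_of_pos hc m).ne'
  field_simp

theorem deriv_deriv_eq_of_hasDerivAt_inv_comp {w g : ℝ → ℝ} {J : Set ℝ} (hJ : IsOpen J)
    (hw : Differentiable ℝ w) (hg : ∀ θ ∈ J, HasDerivAt g (w (g θ))⁻¹ θ) {θ : ℝ} (hθ : θ ∈ J)
    (hwθ : w (g θ) ≠ 0) :
    deriv (deriv g) θ = -(deriv w (g θ) * (w (g θ))⁻¹) / w (g θ) ^ 2 := by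
  have heq : deriv g =ᶠ[𝓝 θ] fun θ' => (w (g θ'))⁻¹ := by
    filter_upwards [hJ.mem_nhds hθ] with θ' hθ' using (hg θ' hθ').deriv
  rw [heq.deriv_eq]
  exact (((hw _).hasDerivAt.comp θ (hg θ hθ)).inv hwθ).deriv

theorem hasDerivAt_dual_rhs {Φ w σ g : ℝ → ℝ} {a m η : ℝ} {J : Set ℝ} (hJ : IsOpen J) (hη : η ∈ J)
    (hΦ : Differentiable ℝ Φ) (hodd : ∀ y, Φ (-y) = -Φ y) (hw : ContDiff ℝ 2 w)
    (hwpos : ∀ x, 0 < w x) (hσ : ContDiff ℝ 2 σ) (hσw : ∀ x, -deriv (deriv σ) x = w x)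
    (hg : ∀ θ ∈ J, HasDerivAt g (w (g θ))⁻¹ θ) :
    HasDerivAt (fun θ => a * deriv σ (g θ) - Φ (w (g θ) ^ (m - 1) * deriv w (g θ)))
      (deriv (fun θ => Φ (deriv (deriv g) θ / deriv g θ ^ (2 + m))) η - a) η := by
  have hrhs : (fun θ => Φ (deriv (deriv g) θ / deriv g θ ^ (2 + m))) =ᶠ[𝓝 η]
      fun θ => -Φ (w (g θ) ^ (m - 1) * deriv w (g θ)) := by
    filter_upwards [hJ.mem_nhds hη] with θ hθ
    rw [deriv_deriv_eq_of_hasDerivAt_inv_comp hJ (hw.differentiable two_ne_zero) hg hθ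
      (hwpos _).ne', (hg θ hθ).deriv, neg_mul_inv_div_sq_div_inv_rpow (hwpos _), hodd]
  have hσ' : HasDerivAt (fun θ => a * deriv σ (g θ)) (-a) η := by
    refine (((hσ.differentiable_deriv_two (g η)).hasDerivAt.comp η (hg η hη)).const_mul
      a).congr_deriv ?_
    rw [← neg_neg (deriv (deriv σ) (g η)), hσw, neg_mul, mul_inv_cancel₀ (hwpos _).ne']
    ring
  have hΦ' : DifferentiableAt ℝ (fun θ => Φ (w (g θ) ^ (m - 1) * deriv w (g θ))) η := by
    have hgη := (hg η hη).differentiableAt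
    exact (hΦ _).comp η ((((hw.differentiable two_ne_zero) _).comp η hgη |>.rpow_const
      (Or.inl (hwpos _).ne')).mul ((hw.differentiable_deriv_two _).comp η hgη))
  have hneg : HasDerivAt (fun θ => -Φ (w (g θ) ^ (m - 1) * deriv w (g θ)))
      (-deriv (fun θ => Φ (w (g θ) ^ (m - 1) * deriv w (g θ))) η) η := hΦ'.hasDerivAt.neg
  rw [hrhs.deriv_eq, hneg.deriv]
  exact (hσ'.sub hΦ'.hasDerivAt).congr_deriv (by ring)

theorem stmt_4_general
    (Φ : ℝ → ℝ) (hΦ : ContDiff ℝ 2 Φ)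
    (hodd : ∀ y : ℝ, Φ (-y) = -Φ y)
    (a m T M : ℝ)
    (u S φ : ℝ → ℝ → ℝ)
    (hupos : ∀ t ∈ Set.Ioo (0:ℝ) T, ∀ x : ℝ, 0 < u t x)
    (huC2 : ContDiffOn ℝ 2 (fun p : ℝ × ℝ => u p.1 p.2)
      (Set.Ioo (0:ℝ) T ×ˢ (Set.univ : Set ℝ)))
    (hSC2 : ContDiffOn ℝ 2 (fun p : ℝ × ℝ => S p.1 p.2)
      (Set.Ioo (0:ℝ) T ×ˢ (Set.univ : Set ℝ)))
    (huint : ∀ t ∈ Set.Ioo (0:ℝ) T, MeasureTheory.Integrable (u t))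
    (hφ : ∀ t ∈ Set.Ioo (0:ℝ) T, ∀ η ∈ Set.Ioo (0:ℝ) M,
      (∫ x in Set.Iic (φ t η), u t x) = η)
    (hφC2 : ContDiffOn ℝ 2 (fun p : ℝ × ℝ => φ p.1 p.2)
      (Set.Ioo (0:ℝ) T ×ˢ Set.Ioo (0:ℝ) M))
    (hflux0 : ∀ t ∈ Set.Ioo (0:ℝ) T,
      Filter.Tendsto
        (fun x : ℝ => u t x * Φ ((u t x) ^ (m - 1) * deriv (u t) x)
          - a * deriv (S t) x * u t x)
        Filter.atBot (nhds 0))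
    (hdiff_under : ∀ t ∈ Set.Ioo (0:ℝ) T, ∀ x : ℝ,
      HasDerivAt (fun τ : ℝ => ∫ s in Set.Iic x, u τ s)
        (∫ s in Set.Iic x, deriv (fun τ : ℝ => u τ s) t) t)
    (hPDE : ∀ t ∈ Set.Ioo (0:ℝ) T, ∀ x : ℝ,
      deriv (fun τ : ℝ => u τ x) t
        = deriv (fun ξ : ℝ => u t ξ * Φ ((u t ξ) ^ (m - 1) * deriv (u t) ξ)
            - a * deriv (S t) ξ * u t ξ) x)
    (hS : ∀ t ∈ Set.Ioo (0:ℝ) T, ∀ x : ℝ, -(deriv (deriv (S t)) x) = u t x) :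
    ∀ t ∈ Set.Ioo (0:ℝ) T, ∀ η ∈ Set.Ioo (0:ℝ) M,
      deriv (φ t) η = 1 / u t (φ t η) ∧
      deriv (fun τ : ℝ => deriv (φ τ) η) t
        = deriv (fun θ : ℝ =>
            Φ (deriv (deriv (φ t)) θ / (deriv (φ t) θ) ^ (2 + m))) η - a := by
  intro t ht η hη
  have hΩ : IsOpen (Ioo (0 : ℝ) T ×ˢ Ioo (0 : ℝ) M) := isOpen_Ioo.prod isOpen_Ioo
  have hφdiff : ∀ θ ∈ Ioo (0 : ℝ) M, DifferentiableAt ℝ (fun p : ℝ × ℝ => φ p.1 p.2) (t, θ) :=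
    fun θ hθ => (hφC2.contDiffAt (hΩ.mem_nhds ⟨ht, hθ⟩)).differentiableAt two_ne_zero
  have hφη : ∀ θ ∈ Ioo (0 : ℝ) M, HasDerivAt (φ t) (u t (φ t θ))⁻¹ θ := fun θ hθ =>
    hasDerivAt_of_integral_Iic_comp_eq (huC2.continuousOn.continuous_slice ht) (huint t ht)
      (hφdiff θ hθ).hasDerivAt_snd_slice.continuousAt
      (eventually_of_mem (isOpen_Ioo.mem_nhds hθ) (hφ t ht)) (hupos t ht _).ne'
  have hFt : ∀ τ ∈ Ioo (0 : ℝ) T, ∀ x,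
      HasDerivAt (fun τ' => ∫ s in Iic x, u τ' s) (flux Φ a m u S τ x) τ := fun τ hτ =>
    hasDerivAt_integral_Iic_of_deriv_eq isOpen_Ioo (huC2.of_le one_le_two) huint hτ
      (hdiff_under τ hτ) (fun y => hPDE τ hτ y ▸ ((contDiff_flux (hΦ.of_le one_le_two)
        (huC2.contDiff_slice hτ) (hupos τ hτ) (hSC2.contDiff_slice hτ)).differentiable
          one_ne_zero y).hasDerivAt) (hflux0 τ hτ)
  have hφt : (fun θ => deriv (fun τ => φ τ θ) t) =ᶠ[𝓝 η]
      fun θ => a * deriv (S t) (φ t θ) - Φ (u t (φ t θ) ^ (m - 1) * deriv (u t) (φ t θ)) := by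
    filter_upwards [isOpen_Ioo.mem_nhds hη] with θ hθ
    have hW : IsOpen (Ioo (0 : ℝ) T ×ˢ (univ : Set ℝ)) := isOpen_Ioo.prod isOpen_univ
    rw [← neg_flux_div (hupos t ht _).ne']
    refine (hasDerivAt_of_integral_Iic_comp_eq_const isOpen_Ioo huC2.continuousOn huint hFt ht
      ((continuousOn_flux hΦ.continuous hW (huC2.of_le one_le_two) (hSC2.of_le one_le_two)
        fun p hp => hupos p.1 hp.1 p.2).continuousAt (hW.mem_nhds ⟨ht, trivial⟩))
      (hφdiff θ hθ).hasDerivAt_fst_slice.differentiableAt ?_ (hupos t ht _).ne').deriv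
    filter_upwards [isOpen_Ioo.mem_nhds ht] with τ hτ
    rw [hφ τ hτ θ hθ, hφ t ht θ hθ]
  refine ⟨by rw [(hφη η hη).deriv, one_div], ?_⟩
  rw [hφC2.deriv_deriv_comm hΩ ⟨ht, hη⟩, hφt.deriv_eq]
  exact (hasDerivAt_dual_rhs isOpen_Ioo hη (hΦ.differentiable two_ne_zero) hodd
    (huC2.contDiff_slice ht) (hupos t ht) (hSC2.contDiff_slice ht) (hS t ht) hφη).deriv

theorem stmt_4 (c α : ℝ) (hc : 0 < c) (hα : 2 ≤ α)
    (Φ : ℝ → ℝ) (hΦ : ContDiff ℝ 2 Φ)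
    (hodd : ∀ y : ℝ, Φ (-y) = -Φ y)
    (hΦ' : ∀ y : ℝ, 0 < deriv Φ y)
    (hlim : Filter.Tendsto Φ Filter.atTop (nhds c))
    (C₀ y₀ : ℝ) (hC₀ : 0 < C₀) (hy₀ : 0 < y₀)
    (hdecay : ∀ y : ℝ, y₀ ≤ y → deriv Φ y ≤ C₀ * y ^ (-α - 1))
    (a m T M : ℝ) (ha : 0 < a) (hm : 0 ≤ m) (hT : 0 < T) (hM : 0 < M)
    (u S φ : ℝ → ℝ → ℝ)
    (hupos : ∀ t ∈ Set.Ioo (0:ℝ) T, ∀ x : ℝ, 0 < u t x)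
    (huC2 : ContDiffOn ℝ 2 (fun p : ℝ × ℝ => u p.1 p.2)
      (Set.Ioo (0:ℝ) T ×ˢ (Set.univ : Set ℝ)))
    (hSC2 : ContDiffOn ℝ 2 (fun p : ℝ × ℝ => S p.1 p.2)
      (Set.Ioo (0:ℝ) T ×ˢ (Set.univ : Set ℝ)))
    (huint : ∀ t ∈ Set.Ioo (0:ℝ) T, MeasureTheory.Integrable (u t))
    (humass : ∀ t ∈ Set.Ioo (0:ℝ) T, (∫ x : ℝ, u t x) = M)
    (hφ : ∀ t ∈ Set.Ioo (0:ℝ) T, ∀ η ∈ Set.Ioo (0:ℝ) M,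
      (∫ x in Set.Iic (φ t η), u t x) = η)
    (hφC2 : ContDiffOn ℝ 2 (fun p : ℝ × ℝ => φ p.1 p.2)
      (Set.Ioo (0:ℝ) T ×ˢ Set.Ioo (0:ℝ) M))
    (hflux0 : ∀ t ∈ Set.Ioo (0:ℝ) T,
      Filter.Tendsto
        (fun x : ℝ => u t x * Φ ((u t x) ^ (m - 1) * deriv (u t) x)
          - a * deriv (S t) x * u t x)
        Filter.atBot (nhds 0))
    (hdiff_under : ∀ t ∈ Set.Ioo (0:ℝ) T, ∀ x : ℝ,
      HasDerivAt (fun τ : ℝ => ∫ s in Set.Iic x, u τ s)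
        (∫ s in Set.Iic x, deriv (fun τ : ℝ => u τ s) t) t)
    (hPDE : ∀ t ∈ Set.Ioo (0:ℝ) T, ∀ x : ℝ,
      deriv (fun τ : ℝ => u τ x) t
        = deriv (fun ξ : ℝ => u t ξ * Φ ((u t ξ) ^ (m - 1) * deriv (u t) ξ)
            - a * deriv (S t) ξ * u t ξ) x)
    (hS : ∀ t ∈ Set.Ioo (0:ℝ) T, ∀ x : ℝ, -(deriv (deriv (S t)) x) = u t x) :
    ∀ t ∈ Set.Ioo (0:ℝ) T, ∀ η ∈ Set.Ioo (0:ℝ) M,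
      deriv (φ t) η = 1 / u t (φ t η) ∧
      deriv (fun τ : ℝ => deriv (φ τ) η) t
        = deriv (fun θ : ℝ =>
            Φ (deriv (deriv (φ t)) θ / (deriv (φ t) θ) ^ (2 + m))) η - a :=
  stmt_4_general Φ hΦ hodd a m T M u S φ hupos huC2 hSC2 huint hφ hφC2 hflux0 hdiff_under hPDE hS
end

section
/- Let M > 0, δ₀ ∈ (0,M), κ > 0, and let v₀ : [0,M] → (0,∞) be a function. For ε > 0 set B(ε) := (c − ε^κ)/(2ε). Then there exists ε̃ ∈ (0, δ₀) such that for every ε with 0 < ε < ε̃ the following two inequalities hold: Φ( B(ε) / v₀(0)^(2+m) ) + ε·B(ε) > c − ε^κ, and Φ( B(ε) / (v₀(δ₀) + δ₀·B(ε))^(2+m) ) + ε·B(ε) < c − ε^κ. -/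
/-!
With `B(ε) = (c - ε^κ)/(2ε)` one has `ε B(ε) = (c - ε^κ)/2`, so both inequalities compare a value
of `Φ` with `(c - ε^κ)/2 → c/2`. As `ε → 0⁺`, `B(ε) → ∞`; hence the first argument of `Φ` tends
to `+∞` and its value to `c > c/2`, while the second argument behaves like `δ₀^{-(2+m)} B^{-(1+m)}`,
tends to `0`, and its value to `Φ 0 = 0 < c/2`.
-/

open Filter Topology Set

theorem exists_mem_Ioo_forall_of_eventually_nhdsGT {α : Type*} [LinearOrder α] [TopologicalSpace α]
    [OrderTopology α] [DenselyOrdered α] {a b : α} {p : α → Prop} (hab : a < b)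
    (h : ∀ᶠ x in 𝓝[>] a, p x) : ∃ t ∈ Ioo a b, ∀ x, a < x → x < t → p x := by
  obtain ⟨u, ⟨hau, hub⟩, hu⟩ := (mem_nhdsGT_iff_exists_mem_Ioc_Ioo_subset hab).1 h
  obtain ⟨t, hat, htu⟩ := exists_between hau
  exact ⟨t, ⟨hat, htu.trans_le hub⟩, fun x hax hxt => hu ⟨hax, hxt.trans htu⟩⟩

theorem tendsto_div_rpow_add_mul_atTop {a δ p : ℝ} (ha : 0 ≤ a) (hδ : 0 < δ) (hp : 1 < p) :
    Tendsto (fun x => x / (a + δ * x) ^ p) atTop (𝓝 0) := by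
  have hbound : Tendsto (fun x : ℝ => δ ^ (-p) * x ^ (-(p - 1))) atTop (𝓝 0) := by
    simpa using tendsto_const_nhds.mul (tendsto_rpow_neg_atTop (sub_pos.2 hp))
  refine tendsto_of_tendsto_of_tendsto_of_le_of_le' tendsto_const_nhds hbound ?_ ?_
  · filter_upwards [eventually_ge_atTop 0] with x hx
    positivity
  · filter_upwards [eventually_gt_atTop 0] with x hx
    have hδx : 0 < δ * x := mul_pos hδ hx
    calc x / (a + δ * x) ^ p
        ≤ x / (δ * x) ^ p :=
          div_le_div_of_nonneg_left hx.le (Real.rpow_pos_of_pos hδx _)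
            (Real.rpow_le_rpow hδx.le (by linarith) (by linarith))
      _ = δ ^ (-p) * x ^ (-(p - 1)) := by
          rw [Real.mul_rpow hδ.le hx.le, Real.rpow_neg hδ.le, neg_sub, Real.rpow_sub hx,
            Real.rpow_one]
          ring

section

variable {c κ : ℝ}

theorem tendsto_sub_rpow_nhdsGT_zero (hκ : 0 < κ) :
    Tendsto (fun ε : ℝ => c - ε ^ κ) (𝓝[>] 0) (𝓝 c) := by
  have h : ContinuousAt (fun ε : ℝ => c - ε ^ κ) 0 :=
    continuousAt_const.sub (Real.continuousAt_rpow_const 0 κ (Or.inr hκ.le))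
  simpa [Real.zero_rpow hκ.ne'] using h.tendsto.mono_left nhdsWithin_le_nhds

theorem tendsto_sub_rpow_div_two_mul_atTop (hc : 0 < c) (hκ : 0 < κ) :
    Tendsto (fun ε : ℝ => (c - ε ^ κ) / (2 * ε)) (𝓝[>] 0) atTop := by
  have hinv : Tendsto (fun ε : ℝ => (2 * ε)⁻¹) (𝓝[>] 0) atTop :=
    (tendsto_inv_nhdsGT_zero.const_mul_atTop (by norm_num : (0 : ℝ) < 1 / 2)).congr
      fun ε => by rw [mul_inv]; ring
  exact ((tendsto_sub_rpow_nhdsGT_zero hκ).pos_mul_atTop hc hinv).congr fun ε =>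
    (div_eq_mul_inv _ _).symm

theorem tendsto_mul_sub_rpow_div_two_mul_sub (hκ : 0 < κ) :
    Tendsto (fun ε : ℝ => ε * ((c - ε ^ κ) / (2 * ε)) - (c - ε ^ κ)) (𝓝[>] 0)
      (𝓝 (-(c / 2))) := by
  have h : Tendsto (fun ε : ℝ => -((c - ε ^ κ) / 2)) (𝓝[>] 0) (𝓝 (-(c / 2))) :=
    ((tendsto_sub_rpow_nhdsGT_zero hκ).div_const 2).neg
  refine h.congr' ?_
  filter_upwards [self_mem_nhdsWithin] with ε (hε : 0 < ε)
  field_simp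
  ring

end

theorem stmt_6_general (c : ℝ) (hc : 0 < c)
    (Φ : ℝ → ℝ) (hΦ : ContDiff ℝ 2 Φ)
    (hodd : ∀ y : ℝ, Φ (-y) = -Φ y)
    (hlim : Filter.Tendsto Φ Filter.atTop (nhds c))
    (m : ℝ) (hm : 0 ≤ m)
    (M δ₀ κ : ℝ) (hδ₀ : δ₀ ∈ Set.Ioo (0:ℝ) M) (hκ : 0 < κ)
    (v₀ : ℝ → ℝ) (hv₀ : ∀ η ∈ Set.Icc (0:ℝ) M, 0 < v₀ η) :
    ∃ εt ∈ Set.Ioo (0:ℝ) δ₀, ∀ ε : ℝ, 0 < ε → ε < εt →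
      c - ε ^ κ <
        Φ (((c - ε ^ κ) / (2 * ε)) / (v₀ 0) ^ (2 + m))
          + ε * ((c - ε ^ κ) / (2 * ε)) ∧
      Φ (((c - ε ^ κ) / (2 * ε))
            / (v₀ δ₀ + δ₀ * ((c - ε ^ κ) / (2 * ε))) ^ (2 + m))
          + ε * ((c - ε ^ κ) / (2 * ε)) < c - ε ^ κ := by
  obtain ⟨hδ₀, hδ₀M⟩ := hδ₀
  have hv₀0 : 0 < v₀ 0 := hv₀ 0 ⟨le_rfl, (hδ₀.trans hδ₀M).le⟩
  have hv₀δ₀ : 0 < v₀ δ₀ := hv₀ δ₀ ⟨hδ₀.le, hδ₀M.le⟩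
  have hΦ0 : Φ 0 = 0 := by
    have h := hodd 0
    rw [neg_zero] at h
    linarith
  have hB := tendsto_sub_rpow_div_two_mul_atTop hc hκ
  have hgap := tendsto_mul_sub_rpow_div_two_mul_sub (c := c) hκ
  have hlarge : Tendsto (fun ε => Φ ((c - ε ^ κ) / (2 * ε) / v₀ 0 ^ (2 + m))) (𝓝[>] 0) (𝓝 c) :=
    hlim.comp (hB.atTop_div_const (Real.rpow_pos_of_pos hv₀0 _))
  have hsmall : Tendsto (fun ε => Φ ((c - ε ^ κ) / (2 * ε)
      / (v₀ δ₀ + δ₀ * ((c - ε ^ κ) / (2 * ε))) ^ (2 + m))) (𝓝[>] 0) (𝓝 0) := by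
    have hΦcont := hΦ.continuous.tendsto 0
    rw [hΦ0] at hΦcont
    exact hΦcont.comp ((tendsto_div_rpow_add_mul_atTop hv₀δ₀.le hδ₀ (by linarith)).comp hB)
  have h₁ := (hlarge.add hgap).eventually_const_lt (by linarith : (0 : ℝ) < c + -(c / 2))
  have h₂ := (hsmall.add hgap).eventually_lt_const (by linarith : (0 : ℝ) + -(c / 2) < 0)
  obtain ⟨εt, hεt, hεt_spec⟩ := exists_mem_Ioo_forall_of_eventually_nhdsGT hδ₀ (h₁.and h₂)
  refine ⟨εt, hεt, fun ε hε hεεt => ?_⟩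
  obtain ⟨h₁ε, h₂ε⟩ := hεt_spec ε hε hεεt
  constructor <;> linarith

theorem stmt_6 (c α : ℝ) (hc : 0 < c) (hα : 2 ≤ α)
    (Φ : ℝ → ℝ) (hΦ : ContDiff ℝ 2 Φ)
    (hodd : ∀ y : ℝ, Φ (-y) = -Φ y)
    (hΦ' : ∀ y : ℝ, 0 < deriv Φ y)
    (hlim : Filter.Tendsto Φ Filter.atTop (nhds c))
    (C₀ y₀ : ℝ) (hC₀ : 0 < C₀) (hy₀ : 0 < y₀)
    (hdecay : ∀ y : ℝ, y₀ ≤ y → deriv Φ y ≤ C₀ * y ^ (-α - 1))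
    (m : ℝ) (hm : 0 ≤ m)
    (M δ₀ κ : ℝ) (hM : 0 < M) (hδ₀ : δ₀ ∈ Set.Ioo (0:ℝ) M) (hκ : 0 < κ)
    (v₀ : ℝ → ℝ) (hv₀ : ∀ η ∈ Set.Icc (0:ℝ) M, 0 < v₀ η) :
    ∃ εt ∈ Set.Ioo (0:ℝ) δ₀, ∀ ε : ℝ, 0 < ε → ε < εt →
      c - ε ^ κ <
        Φ (((c - ε ^ κ) / (2 * ε)) / (v₀ 0) ^ (2 + m))
          + ε * ((c - ε ^ κ) / (2 * ε)) ∧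
      Φ (((c - ε ^ κ) / (2 * ε))
            / (v₀ δ₀ + δ₀ * ((c - ε ^ κ) / (2 * ε))) ^ (2 + m))
          + ε * ((c - ε ^ κ) / (2 * ε)) < c - ε ^ κ :=
  stmt_6_general c hc Φ hΦ hodd hlim m hm M δ₀ κ hδ₀ hκ v₀ hv₀
end
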